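/- arXiv:2004.04212 — 3 statements merged into one kernel-verified Lean document; each statement's English description precedes it below -/
import Mathlib

section
/- Fix M > 0 and a bounded measurable function V : ℝ → ℝ with V(x) = 0 for x ∉ [0, M], and let θ ∈ ℝ with θ ≠ 0 and ψ_θ'(M) = 0. Then ∫₀ᴹ V(t) ψ_θ(t)² dt = −(1/θ) ∫₀ᴹ (ψ_θ'(t))² dt, and in particular ∫₀ᴹ V(t) ψ_θ(t)² dt ≠ 0. -/
/-!
Write `φ = 1 + θ ∫₀ᵗ V ψ` for `ψ'`. By Cauchy's formula for repeated integration the Volterra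
equation says `ψ = ∫₀ˣ φ`, and `φ` is absolutely continuous with `φ' = θ V ψ` almost everywhere.
Integrating `φ ψ'` by parts gives `∫₀ᴹ φ² = φ(M) ψ(M) - θ ∫₀ᴹ V ψ²`, whose boundary term vanishes
since `φ(M) = 0`; and `∫₀ᴹ φ² > 0` because `φ` is continuous with `φ(0) = 1`.
-/

open MeasureTheory Set Interval

theorem intervalIntegrable_of_abs_le {f : ℝ → ℝ} (hf : AEStronglyMeasurable f volume) {C : ℝ}
    (hC : ∀ x, |f x| ≤ C) (a b : ℝ) : IntervalIntegrable f volume a b :=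
  intervalIntegrable_iff.2 <|
    Measure.integrableOn_of_bounded measure_Ioc_lt_top.ne hf (ae_of_all _ hC)

theorem integral_primitive_mul_eq_sub {f g : ℝ → ℝ} {a b : ℝ} (c : ℝ)
    (hf : IntervalIntegrable f volume a b) (hg : IntervalIntegrable g volume a b) :
    ∫ x in a..b, (c + ∫ t in a..x, f t) * g x =
      (c + ∫ t in a..b, f t) * (∫ t in a..b, g t) - ∫ x in a..b, f x * ∫ t in a..x, g t := by
  have hF : AbsolutelyContinuousOnInterval (fun x => c + ∫ t in a..x, f t) a b :=
    (LipschitzWith.const c).lipschitzOnWith.absolutelyContinuousOnInterval.add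
      (hf.absolutelyContinuousOnInterval_intervalIntegral left_mem_uIcc)
  have hG := hg.absolutelyContinuousOnInterval_intervalIntegral (c := a) left_mem_uIcc
  have hibp := hF.integral_mul_deriv_eq_deriv_mul hG
  have hderiv : ∀ᵐ x, x ∈ Ι a b → deriv (fun x => c + ∫ t in a..x, f t) x = f x ∧
      deriv (fun x => ∫ t in a..x, g t) x = g x := by
    filter_upwards [hf.ae_hasDerivAt_integral, hg.ae_hasDerivAt_integral] with x hfx hgx hx
    have hx' := uIoc_subset_uIcc hx
    exact ⟨((hfx hx' a left_mem_uIcc).const_add c).deriv, (hgx hx' a left_mem_uIcc).deriv⟩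
  have hFG : ∫ x in a..b, (c + ∫ t in a..x, f t) * deriv (fun x => ∫ t in a..x, g t) x =
      ∫ x in a..b, (c + ∫ t in a..x, f t) * g x :=
    intervalIntegral.integral_congr_ae (hderiv.mono fun x hx hx' => by rw [(hx hx').2])
  have hfG : ∫ x in a..b, deriv (fun x => c + ∫ t in a..x, f t) x * ∫ t in a..x, g t =
      ∫ x in a..b, f x * ∫ t in a..x, g t :=
    intervalIntegral.integral_congr_ae (hderiv.mono fun x hx hx' => by rw [(hx hx').1])
  rw [hFG, hfG] at hibp
  simpa using hibp

theorem continuousOn_const_add_mul_primitive {f : ℝ → ℝ} {a b : ℝ} (c θ : ℝ)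
    (hf : IntervalIntegrable f volume a b) :
    ContinuousOn (fun t => c + θ * ∫ s in a..t, f s) [[a, b]] :=
  continuousOn_const.add
    ((hf.absolutelyContinuousOnInterval_intervalIntegral left_mem_uIcc).continuousOn.const_smul θ)

theorem integral_primitive_eq_integral_sub_mul {f : ℝ → ℝ} {a b : ℝ}
    (hf : IntervalIntegrable f volume a b) :
    ∫ x in a..b, ∫ t in a..x, f t = ∫ t in a..b, (b - t) * f t := by
  have h := integral_primitive_mul_eq_sub 0 hf (intervalIntegrable_const (c := (1 : ℝ)))
  simp only [zero_add, mul_one, intervalIntegral.integral_const, smul_eq_mul] at h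
  have hsplit : ∀ t, (b - t) * f t = (b - a) * f t - f t * (t - a) := fun t => by ring
  simp_rw [hsplit]
  rw [h, intervalIntegral.integral_sub (hf.const_mul _)
    (hf.mul_continuousOn (g := fun t => t - a) (by fun_prop)),
    intervalIntegral.integral_const_mul]
  ring

theorem eq_integral_one_add_primitive_of_volterra {V ψ : ℝ → ℝ} {θ x : ℝ}
    (hVψ : IntervalIntegrable (fun t => V t * ψ t) volume 0 x)
    (hψ : ψ x = x + θ * ∫ t in (0:ℝ)..x, (x - t) * V t * ψ t) :
    ψ x = ∫ t in (0:ℝ)..x, (1 + θ * ∫ s in (0:ℝ)..t, V s * ψ s) := by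
  have hprim : IntervalIntegrable (fun t => ∫ s in (0:ℝ)..t, V s * ψ s) volume 0 x :=
    (hVψ.absolutelyContinuousOnInterval_intervalIntegral
      left_mem_uIcc).continuousOn.intervalIntegrable
  rw [intervalIntegral.integral_add intervalIntegrable_const (hprim.const_mul θ),
    intervalIntegral.integral_const_mul, integral_primitive_eq_integral_sub_mul hVψ, hψ]
  simp [mul_assoc]

theorem integral_sq_one_add_primitive_of_volterra {V ψ : ℝ → ℝ} {θ b : ℝ}
    (hVψ : IntervalIntegrable (fun t => V t * ψ t) volume 0 b)
    (hψ : ∀ x ∈ [[0, b]], ψ x = x + θ * ∫ t in (0:ℝ)..x, (x - t) * V t * ψ t) :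
    ∫ t in (0:ℝ)..b, (1 + θ * ∫ s in (0:ℝ)..t, V s * ψ s) ^ 2 =
      (1 + θ * ∫ t in (0:ℝ)..b, V t * ψ t) * ψ b - θ * ∫ t in (0:ℝ)..b, V t * ψ t ^ 2 := by
  have hψint : ∀ x ∈ [[0, b]], ψ x = ∫ t in (0:ℝ)..x, (1 + θ * ∫ s in (0:ℝ)..t, V s * ψ s) :=
    fun x hx => eq_integral_one_add_primitive_of_volterra
      (hVψ.mono_set (uIcc_subset_uIcc_left hx)) (hψ x hx)
  have h := integral_primitive_mul_eq_sub 1 (hVψ.const_mul θ)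
    (continuousOn_const_add_mul_primitive 1 θ hVψ).intervalIntegrable
  simp only [intervalIntegral.integral_const_mul] at h
  have hrhs : ∫ x in (0:ℝ)..b,
        θ * (V x * ψ x) * ∫ t in (0:ℝ)..x, (1 + θ * ∫ s in (0:ℝ)..t, V s * ψ s) =
      θ * ∫ x in (0:ℝ)..b, V x * ψ x ^ 2 := by
    rw [← intervalIntegral.integral_const_mul]
    exact intervalIntegral.integral_congr fun x hx => by simp only [← hψint x hx]; ring
  rw [← hψint b right_mem_uIcc, hrhs] at h
  simpa only [sq] using h

theorem integral_V_psi_sq_ne_zero_general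
    (M : ℝ) (hM : 0 < M) (V : ℝ → ℝ) (hVmeas : Measurable V)
    (hVbd : ∃ C : ℝ, ∀ x : ℝ, |V x| ≤ C)
    (θ : ℝ) (hθ : θ ≠ 0) (ψ : ℝ → ℝ) (hψc : ContinuousOn ψ (Set.Ici 0))
    (hψ : ∀ x ≥ (0:ℝ), ψ x = x + θ * ∫ t in (0:ℝ)..x, (x - t) * V t * ψ t)
    (hres : 1 + θ * ∫ t in (0:ℝ)..M, V t * ψ t = 0) :
    (∫ t in (0:ℝ)..M, V t * ψ t ^ 2)
      = -(1 / θ) * ∫ t in (0:ℝ)..M, (1 + θ * ∫ s in (0:ℝ)..t, V s * ψ s) ^ 2 ∧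
    (∫ t in (0:ℝ)..M, V t * ψ t ^ 2) ≠ 0 := by
  obtain ⟨C, hC⟩ := hVbd
  have hnonneg : ∀ x ∈ [[0, M]], 0 ≤ x := fun x hx => (uIcc_of_le hM.le ▸ hx).1
  have hVψ : IntervalIntegrable (fun t => V t * ψ t) volume 0 M :=
    (intervalIntegrable_of_abs_le hVmeas.aestronglyMeasurable hC 0 M).mul_continuousOn
      (hψc.mono hnonneg)
  have henergy := integral_sq_one_add_primitive_of_volterra hVψ fun x hx => hψ x (hnonneg x hx)
  rw [hres, zero_mul, zero_sub] at henergy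
  have hpos : 0 < ∫ t in (0:ℝ)..M, (1 + θ * ∫ s in (0:ℝ)..t, V s * ψ s) ^ 2 := by
    refine intervalIntegral.integral_pos hM ?_ (fun _ _ => sq_nonneg _)
      ⟨0, left_mem_Icc.2 hM.le, by simp⟩
    exact (uIcc_of_le hM.le ▸ continuousOn_const_add_mul_primitive 1 θ hVψ).pow 2
  refine ⟨by rw [henergy]; field_simp, fun h0 => ?_⟩
  rw [h0, mul_zero, neg_zero] at henergy
  exact hpos.ne' henergy

/-- If `θ ≠ 0` and `ψ_θ'(M) = 0`, then
`∫₀ᴹ V ψ_θ² = −(1/θ) ∫₀ᴹ (ψ_θ')²`, and in particular `∫₀ᴹ V ψ_θ² ≠ 0`.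
Here `ψ_θ'(x) = 1 + θ ∫₀ˣ V ψ_θ`. -/
theorem integral_V_psi_sq_ne_zero
    (M : ℝ) (hM : 0 < M) (V : ℝ → ℝ) (hVmeas : Measurable V)
    (hVbd : ∃ C : ℝ, ∀ x : ℝ, |V x| ≤ C)
    (hVsupp : ∀ x : ℝ, x ∉ Set.Icc 0 M → V x = 0)
    (θ : ℝ) (hθ : θ ≠ 0) (ψ : ℝ → ℝ) (hψc : ContinuousOn ψ (Set.Ici 0))
    (hψ : ∀ x ≥ (0:ℝ), ψ x = x + θ * ∫ t in (0:ℝ)..x, (x - t) * V t * ψ t)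
    (hres : 1 + θ * ∫ t in (0:ℝ)..M, V t * ψ t = 0) :
    (∫ t in (0:ℝ)..M, V t * ψ t ^ 2)
      = -(1 / θ) * ∫ t in (0:ℝ)..M, (1 + θ * ∫ s in (0:ℝ)..t, V s * ψ s) ^ 2 ∧
    (∫ t in (0:ℝ)..M, V t * ψ t ^ 2) ≠ 0 :=
  integral_V_psi_sq_ne_zero_general M hM V hVmeas hVbd θ hθ ψ hψc hψ hres
end

section
/- Fix M > 0 and a bounded measurable function V : ℝ → ℝ with V(x) = 0 for x ∉ [0, M], let θ ∈ ℝ with ψ_θ'(M) = 0, let ψ̃_θ be the unique continuous solution of ψ̃_θ(x) = 1 + θ ∫₀ˣ (x − t) V(t) ψ̃_θ(t) dt, and let g(x) := (∫₀ˣ V(t) ψ̃_θ(t) ψ_θ(t) dt) ψ_θ(x) − (∫₀ˣ V(t) ψ_θ(t)² dt) ψ̃_θ(x). Then g'(M) = (1/ψ_θ(M)) ∫₀ᴹ V(t) ψ_θ(t)² dt. -/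
/-!
In integral form, ψ and ψ̃ are the solutions of `u = u(0) + ∫ u'`, `u' = u'(0) + θ ∫ V u` with
`(u, u')(0) = (0, 1)` and `(1, 0)`; all four functions are absolutely continuous, so the product
rule holds for them. It gives two facts. The Wronskian `ψ ψ̃' - ψ' ψ̃` is constant, equal to `-1`,
so `ψ'(M) = 0` forces `ψ(M) ψ̃'(M) = -1`. And since `V` is merely measurable, the two integrals
`F = ∫ V ψ̃ ψ` and `G = ∫ V ψ²` in `g = F ψ - G ψ̃` need not be differentiable at `M`, but their
derivatives cancel in the product rule: `g = ∫₀ˣ (F ψ' - G ψ̃')` is the primitive of a continuous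
function, whence `g'(M) = F(M) ψ'(M) - G(M) ψ̃'(M) = G(M) / ψ(M)`.
-/

open MeasureTheory Set intervalIntegral

theorem continuousOn_of_eq_add_integral {u u' : ℝ → ℝ} {a b : ℝ}
    (hu' : IntervalIntegrable u' volume a b)
    (hu : ∀ x ∈ uIcc a b, u x = u a + ∫ t in a..x, u' t) :
    ContinuousOn u (uIcc a b) :=
  (continuousOn_const.add (continuousOn_primitive_interval' hu' left_mem_uIcc)).congr hu

theorem integral_deriv_mul_eq_sub_of_eq_add_integral {u v u' v' : ℝ → ℝ} {a b : ℝ}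
    (hu' : IntervalIntegrable u' volume a b) (hv' : IntervalIntegrable v' volume a b)
    (hu : ∀ x ∈ uIcc a b, u x = u a + ∫ t in a..x, u' t)
    (hv : ∀ x ∈ uIcc a b, v x = v a + ∫ t in a..x, v' t) :
    ∫ x in a..b, u' x * v x + u x * v' x = u b * v b - u a * v a := by
  set U : ℝ → ℝ := fun x ↦ u a + ∫ t in a..x, u' t
  set W : ℝ → ℝ := fun x ↦ v a + ∫ t in a..x, v' t
  have hconst : ∀ c : ℝ, AbsolutelyContinuousOnInterval (fun _ ↦ c) a b := fun c ↦
    (LipschitzWith.const c).lipschitzOnWith.absolutelyContinuousOnInterval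
  have hU : AbsolutelyContinuousOnInterval U a b :=
    (hconst _).add (hu'.absolutelyContinuousOnInterval_intervalIntegral left_mem_uIcc)
  have hW : AbsolutelyContinuousOnInterval W a b :=
    (hconst _).add (hv'.absolutelyContinuousOnInterval_intervalIntegral left_mem_uIcc)
  have hUa : U a = u a := by simp [U]
  have hWa : W a = v a := by simp [W]
  have hUb : U b = u b := (hu b right_mem_uIcc).symm
  have hWb : W b = v b := (hv b right_mem_uIcc).symm
  rw [← hUb, ← hWb, ← hUa, ← hWa, ← hU.integral_deriv_mul_eq_sub hW]
  refine integral_congr_ae ?_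
  filter_upwards [hu'.ae_hasDerivAt_integral, hv'.ae_hasDerivAt_integral] with x hxu hxv hx
  have hx' := uIoc_subset_uIcc hx
  rw [((hxu hx' a left_mem_uIcc).const_add _).deriv, ((hxv hx' a left_mem_uIcc).const_add _).deriv,
    hu x hx', hv x hx']

theorem integral_sub_mul_eq_integral_integral {f : ℝ → ℝ} {a b : ℝ}
    (hf : IntervalIntegrable f volume a b) :
    ∫ t in a..b, (b - t) * f t = ∫ t in a..b, ∫ s in a..t, f s := by
  have hparts := integral_deriv_mul_eq_sub_of_eq_add_integral (u := fun x ↦ ∫ s in a..x, f s)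
    (v := fun t ↦ b - t) (v' := fun _ ↦ -1) hf intervalIntegrable_const (by simp)
    (fun x _ ↦ by simp)
  have hF : ContinuousOn (fun x ↦ ∫ s in a..x, f s) (uIcc a b) :=
    continuousOn_primitive_interval' hf left_mem_uIcc
  simp only [sub_self, mul_zero, integral_same, zero_mul, mul_neg, mul_one] at hparts
  rw [integral_add (f := fun x ↦ f x * (b - x)) (g := fun x ↦ -∫ s in a..x, f s)
    (hf.mul_continuousOn (by fun_prop)) hF.intervalIntegrable.neg, intervalIntegral.integral_neg,
    add_neg_eq_zero] at hparts
  rw [← hparts]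
  exact integral_congr fun t _ ↦ mul_comm _ _

theorem integrable_mul_of_bounded_of_eq_zero_off_Icc {V w : ℝ → ℝ} {a b C : ℝ}
    (hV : AEStronglyMeasurable V) (hC : ∀ x, |V x| ≤ C) (hVsupp : ∀ x ∉ Icc a b, V x = 0)
    (hw : ContinuousOn w (Icc a b)) : Integrable fun t ↦ V t * w t := by
  have hVI : IntegrableOn V (Icc a b) :=
    Measure.integrableOn_of_bounded measure_Icc_lt_top.ne hV
      (.of_forall fun x ↦ hC x)
  refine (integrableOn_iff_integrable_of_support_subset fun x hx ↦ ?_).mp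
    (hVI.mul_continuousOn hw isCompact_Icc)
  by_contra hxI
  exact hx (by simp [hVsupp x hxI])

theorem eq_add_integral_of_volterra {V w w' : ℝ → ℝ} {θ c d : ℝ}
    (hVw : ∀ x ≥ 0, IntervalIntegrable (fun t ↦ V t * w t) volume 0 x)
    (hw' : ∀ x, w' x = d + θ * ∫ t in 0..x, V t * w t)
    (hw : ∀ x ≥ 0, w x = c + d * x + θ * ∫ t in 0..x, (x - t) * V t * w t) :
    ∀ x ≥ 0, w x = w 0 + ∫ t in 0..x, w' t := by
  intro x hx
  have hprim : IntervalIntegrable (fun t ↦ ∫ s in 0..t, V s * w s) volume 0 x :=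
    (continuousOn_primitive_interval' (hVw x hx) left_mem_uIcc).intervalIntegrable
  rw [hw x hx, hw 0 le_rfl]
  simp only [integral_same, mul_zero, add_zero, funext hw']
  rw [intervalIntegral.integral_add intervalIntegrable_const
    (hprim.const_mul θ), intervalIntegral.integral_const, intervalIntegral.integral_const_mul,
    ← integral_sub_mul_eq_integral_integral (hVw x hx)]
  simp only [mul_assoc, smul_eq_mul, sub_zero]
  ring

theorem wronskian_eq_of_eq_add_integral {V u v u' v' : ℝ → ℝ} {θ a b : ℝ}
    (hu'i : IntervalIntegrable u' volume a b) (hv'i : IntervalIntegrable v' volume a b)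
    (hVu : IntervalIntegrable (fun t ↦ V t * u t) volume a b)
    (hVv : IntervalIntegrable (fun t ↦ V t * v t) volume a b)
    (hu : ∀ x ∈ uIcc a b, u x = u a + ∫ t in a..x, u' t)
    (hv : ∀ x ∈ uIcc a b, v x = v a + ∫ t in a..x, v' t)
    (hu' : ∀ x ∈ uIcc a b, u' x = u' a + θ * ∫ t in a..x, V t * u t)
    (hv' : ∀ x ∈ uIcc a b, v' x = v' a + θ * ∫ t in a..x, V t * v t) :
    u b * v' b - u' b * v b = u a * v' a - u' a * v a := by
  simp only [← intervalIntegral.integral_const_mul] at hu' hv'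
  have huv' := integral_deriv_mul_eq_sub_of_eq_add_integral hu'i (hVv.const_mul θ) hu hv'
  have hu'v := integral_deriv_mul_eq_sub_of_eq_add_integral (hVu.const_mul θ) hv'i hu' hv
  have hsymm : ∫ x in a..b, u' x * v' x + u x * (θ * (V x * v x))
      = ∫ x in a..b, θ * (V x * u x) * v x + u' x * v' x :=
    intervalIntegral.integral_congr fun x _ ↦ by ring
  linarith

theorem integral_mul_sub_integral_mul_eq_integral_of_eq_add_integral
    {f u v u' v' : ℝ → ℝ} {a b : ℝ}
    (hu'i : IntervalIntegrable u' volume a b) (hv'i : IntervalIntegrable v' volume a b)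
    (hfu : IntervalIntegrable (fun t ↦ f t * u t) volume a b)
    (hfv : IntervalIntegrable (fun t ↦ f t * v t) volume a b)
    (hu : ∀ x ∈ uIcc a b, u x = u a + ∫ t in a..x, u' t)
    (hv : ∀ x ∈ uIcc a b, v x = v a + ∫ t in a..x, v' t) :
    (∫ t in a..b, f t * v t) * u b - (∫ t in a..b, f t * u t) * v b
      = ∫ x in a..b, (∫ t in a..x, f t * v t) * u' x - (∫ t in a..x, f t * u t) * v' x := by
  have hF := integral_deriv_mul_eq_sub_of_eq_add_integral
    (u := fun x ↦ ∫ t in a..x, f t * v t) hfv hu'i (by simp) hu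
  have hG := integral_deriv_mul_eq_sub_of_eq_add_integral
    (u := fun x ↦ ∫ t in a..x, f t * u t) hfu hv'i (by simp) hv
  simp only [integral_same, zero_mul, sub_zero] at hF hG
  rw [← hF, ← hG, ← intervalIntegral.integral_sub]
  · exact intervalIntegral.integral_congr fun x _ ↦ by ring
  · exact (hfv.mul_continuousOn (continuousOn_of_eq_add_integral hu'i hu)).add
      (hu'i.continuousOn_mul (continuousOn_primitive_interval' hfv left_mem_uIcc))
  · exact (hfu.mul_continuousOn (continuousOn_of_eq_add_integral hv'i hv)).add
      (hv'i.continuousOn_mul (continuousOn_primitive_interval' hfu left_mem_uIcc))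

/-- If `ψ_θ'(M) = 0`, the variation-of-constants function
`g(x) = (∫₀ˣ V ψ̃_θ ψ_θ) ψ_θ(x) − (∫₀ˣ V ψ_θ²) ψ̃_θ(x)` satisfies
`g'(M) = (1/ψ_θ(M)) ∫₀ᴹ V ψ_θ²`. -/
theorem derivative_of_g_at_M
    (M : ℝ) (hM : 0 < M) (V : ℝ → ℝ) (hVmeas : Measurable V)
    (hVbd : ∃ C : ℝ, ∀ x : ℝ, |V x| ≤ C)
    (hVsupp : ∀ x : ℝ, x ∉ Set.Icc 0 M → V x = 0)
    (θ : ℝ) (ψ ψt : ℝ → ℝ)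
    (hψc : ContinuousOn ψ (Set.Ici 0))
    (hψ : ∀ x ≥ (0:ℝ), ψ x = x + θ * ∫ t in (0:ℝ)..x, (x - t) * V t * ψ t)
    (hψtc : ContinuousOn ψt (Set.Ici 0))
    (hψt : ∀ x ≥ (0:ℝ), ψt x = 1 + θ * ∫ t in (0:ℝ)..x, (x - t) * V t * ψt t)
    (hres : 1 + θ * ∫ t in (0:ℝ)..M, V t * ψ t = 0)
    (g : ℝ → ℝ)
    (hg : ∀ x : ℝ,
      g x = (∫ t in (0:ℝ)..x, V t * ψt t * ψ t) * ψ x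
        - (∫ t in (0:ℝ)..x, V t * ψ t ^ 2) * ψt x) :
    HasDerivAt g ((1 / ψ M) * ∫ t in (0:ℝ)..M, V t * ψ t ^ 2) M := by
  obtain ⟨C, hC⟩ := hVbd
  have hint : ∀ w, ContinuousOn w (Ici 0) → Integrable fun t ↦ V t * w t := fun w hw ↦
    integrable_mul_of_bounded_of_eq_zero_off_Icc hVmeas.aestronglyMeasurable hC hVsupp (hw.mono Icc_subset_Ici_self)
  have hVψ := hint ψ hψc
  have hVψt := hint ψt hψtc
  have hVψψt : Integrable fun t ↦ V t * ψ t * ψt t := by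
    simpa only [mul_assoc] using hint (fun t ↦ ψ t * ψt t) (hψc.mul hψtc)
  have hVψψ : Integrable fun t ↦ V t * ψ t * ψ t := by
    simpa only [mul_assoc] using hint (fun t ↦ ψ t * ψ t) (hψc.mul hψc)
  set ψ' : ℝ → ℝ := fun x ↦ 1 + θ * ∫ t in 0..x, V t * ψ t
  set ψt' : ℝ → ℝ := fun x ↦ θ * ∫ t in 0..x, V t * ψt t
  have hψ'c : Continuous ψ' := continuous_const.add ((hVψ.continuous_primitive 0).const_mul θ)
  have hψt'c : Continuous ψt' := (hVψt.continuous_primitive 0).const_mul θ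
  have hψψ' := eq_add_integral_of_volterra (c := 0) (d := 1) (w' := ψ')
    (fun x _ ↦ hVψ.intervalIntegrable) (fun _ ↦ rfl) (by simpa using hψ)
  have hψtψt' := eq_add_integral_of_volterra (c := 1) (d := 0) (w' := ψt')
    (fun x _ ↦ hVψt.intervalIntegrable) (fun _ ↦ (zero_add _).symm) (by simpa using hψt)
  have hsub : ∀ {x : ℝ}, 0 ≤ x → uIcc 0 x ⊆ Ici 0 := fun hx ↦ by
    rw [uIcc_of_le hx]; exact Icc_subset_Ici_self
  have hψψt' : ψ M * ψt' M = -1 := by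
    have := wronskian_eq_of_eq_add_integral (θ := θ) (hψ'c.intervalIntegrable 0 M)
      (hψt'c.intervalIntegrable 0 M) hVψ.intervalIntegrable hVψt.intervalIntegrable
      (fun x hx ↦ hψψ' x (hsub hM.le hx)) (fun x hx ↦ hψtψt' x (hsub hM.le hx))
      (fun x _ ↦ by simp [ψ']) (fun x _ ↦ by simp [ψt'])
    simpa [hψ 0 le_rfl, hψt 0 le_rfl, ψ', ψt', hres] using this
  have hg_eq : ∀ x ≥ 0, g x = ∫ t in 0..x,
      (∫ s in 0..t, V s * ψ s * ψt s) * ψ' t - (∫ s in 0..t, V s * ψ s * ψ s) * ψt' t := by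
    intro x hx
    rw [hg x, ← integral_mul_sub_integral_mul_eq_integral_of_eq_add_integral
      (hψ'c.intervalIntegrable 0 x) (hψt'c.intervalIntegrable 0 x) hVψψ.intervalIntegrable
      hVψψt.intervalIntegrable (fun y hy ↦ hψψ' y (hsub hx hy))
      (fun y hy ↦ hψtψt' y (hsub hx hy))]
    congr 2 <;> exact integral_congr fun t _ ↦ by ring
  have hcont : Continuous fun x ↦
      (∫ s in 0..x, V s * ψ s * ψt s) * ψ' x - (∫ s in 0..x, V s * ψ s * ψ s) * ψt' x :=
    ((hVψψt.continuous_primitive 0).mul hψ'c).sub ((hVψψ.continuous_primitive 0).mul hψt'c)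
  refine ((hcont.integral_hasStrictDerivAt 0 M).hasDerivAt.congr_of_eventuallyEq
    (eventually_ge_nhds hM |>.mono hg_eq)).congr_deriv ?_
  have hG : ∫ t in 0..M, V t * ψ t * ψ t = ∫ t in 0..M, V t * ψ t ^ 2 :=
    integral_congr fun t _ ↦ by ring
  have hψM : ψ M ≠ 0 := left_ne_zero_of_mul (by rw [hψψt']; norm_num)
  rw [show ψ' M = 0 from hres, hG]
  field_simp
  linear_combination (-∫ t in 0..M, V t * ψ t ^ 2) * hψψt'
end

section
/- Fix M > 0 and a bounded measurable function V : ℝ → ℝ with V(x) = 0 for x ∉ [0, M], and let θ ∈ ℝ with ψ_θ'(M) = 0. Define Ψ : ℝ³ \ {0} → ℝ by Ψ(x) := ψ_θ(|x|)/|x|. Then: (a) for every δ > 0, ∫_{ℝ³} |Ψ(x)|² (1 + |x|²)^{−(1+δ)/2} dx < ∞; and (b) ∫_{ℝ³} |Ψ(x)|² dx = ∞, i.e. Ψ ∉ L²(ℝ³). -/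
/-!
Since `V` vanishes beyond `M`, the Volterra equation reads
`ψ x = x (1 + θ ∫₀ˣ V ψ) - θ ∫₀ˣ t V ψ`, so the resonance condition `1 + θ ∫₀ᴹ V ψ = 0`
(i.e. `ψ'(M) = 0`) makes `ψ` constant on `[M, ∞)`. This constant is nonzero: if `ψ M = 0` then
`ψ x = θ ∫ₓᴹ (t - x) V ψ` on `[0, M]`, and a backward Gronwall argument gives `ψ = 0` there,
whereas the equation forces `ψ M = M`. In polar coordinates `∫ Ψ² w(|x|) dx < ∞` iff
`∫₀^∞ ψ(r)² w(r) dr < ∞`; this holds for `w(r) = (1 + r²)^{-(1+δ)/2}` as `ψ` is bounded, and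
fails for `w = 1` as `ψ² = ψ(M)² > 0` on `[M, ∞)`.
-/

open MeasureTheory Set intervalIntegral

theorem eqOn_zero_of_abs_le_mul_integral_abs {f : ℝ → ℝ} {a b K : ℝ}
    (hf : ContinuousOn f (Icc a b))
    (hle : ∀ x ∈ Icc a b, |f x| ≤ K * ∫ t in x..b, |f t|) :
    EqOn f 0 (Icc a b) := by
  set F : ℝ → ℝ := fun x => ∫ t in x..b, |f t|
  have hle' : ∀ x ∈ Icc a b, |f x| ≤ K * F x := hle
  have hF : ∀ x ∈ Ioo a b, HasDerivAt F (-|f x|) x := fun x hx =>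
    integral_hasDerivAt_left
      ((hf.abs.mono (Icc_subset_Icc hx.1.le le_rfl)).intervalIntegrable_of_Icc hx.2.le)
      ((hf.abs.mono Ioo_subset_Icc_self).stronglyMeasurableAtFilter isOpen_Ioo x hx)
      (hf.abs.continuousAt (Icc_mem_nhds hx.1 hx.2))
  have hFc : ContinuousOn F (Icc a b) := by
    rcases le_or_gt a b with hab | hab
    · rw [← uIcc_of_le hab]
      exact continuousOn_primitive_interval_left (uIcc_of_le hab ▸ hf.abs.integrableOn_Icc)
    · simp [Icc_eq_empty_of_lt hab]
  have hG : ∀ x ∈ Ioo a b, HasDerivAt (fun x => Real.exp (K * x) * F x)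
      (Real.exp (K * x) * (K * F x - |f x|)) x := fun x hx => by
    have hexp : HasDerivAt (fun x => Real.exp (K * x)) (Real.exp (K * x) * K) x := by
      simpa using ((hasDerivAt_id x).const_mul K).exp
    exact (hexp.mul (hF x hx)).congr_deriv (by ring)
  -- `F' = -|f| ≥ -K F`, so `exp (K x) F x` increases up to its value `0` at `b`
  have hmono : MonotoneOn (fun x => Real.exp (K * x) * F x) (Icc a b) := by
    refine monotoneOn_of_deriv_nonneg (convex_Icc a b)
      ((by fun_prop : Continuous fun x => Real.exp (K * x)).continuousOn.mul hFc) ?_ ?_ <;>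
      rw [interior_Icc]
    · exact fun x hx => (hG x hx).differentiableAt.differentiableWithinAt
    · intro x hx
      rw [(hG x hx).deriv]
      exact mul_nonneg (Real.exp_pos _).le (sub_nonneg.2 (hle' x (Ioo_subset_Icc_self hx)))
  intro x hx
  have hFx : F x = 0 := by
    have h1 := hmono hx (right_mem_Icc.2 (hx.1.trans hx.2)) hx.2
    have h2 : 0 ≤ F x := integral_nonneg hx.2 fun t _ => abs_nonneg _
    simp only [F, integral_same, mul_zero] at h1
    nlinarith [Real.exp_pos (K * x)]
  simpa [hFx] using hle' x hx

theorem integrable_mul_of_support_subset_Icc {V ψ : ℝ → ℝ} {a b C : ℝ} (hV : Measurable V)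
    (hVC : ∀ x, |V x| ≤ C) (hVsupp : ∀ x ∉ Icc a b, V x = 0) (hψ : ContinuousOn ψ (Icc a b)) :
    Integrable fun t => V t * ψ t := by
  have hVi : IntegrableOn V (Icc a b) :=
    Measure.integrableOn_of_bounded measure_Icc_lt_top.ne hV.aestronglyMeasurable
      (ae_of_all _ hVC)
  exact (hVi.mul_continuousOn hψ isCompact_Icc).integrable_of_forall_notMem_eq_zero
    fun x hx => by rw [hVsupp x hx, zero_mul]

theorem intervalIntegral_eq_of_forall_gt_eq_zero {f : ℝ → ℝ} {a b c : ℝ} (hbc : b ≤ c)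
    (hab : IntervalIntegrable f volume a b) (hbc' : IntervalIntegrable f volume b c)
    (hf : ∀ t, b < t → f t = 0) :
    ∫ t in a..c, f t = ∫ t in a..b, f t := by
  rw [← integral_add_adjacent_intervals hab hbc', integral_of_le hbc,
    setIntegral_eq_zero_of_forall_eq_zero fun t ht => hf t ht.1, add_zero]

theorem exists_abs_le_of_forall_ge_eq {φ : ℝ → ℝ} {a M : ℝ} (hφ : ContinuousOn φ (Icc a M))
    (haM : a ≤ M) (hconst : ∀ x ≥ M, φ x = φ M) : ∃ B, ∀ x ≥ a, |φ x| ≤ B := by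
  obtain ⟨B, hB⟩ := isCompact_Icc.exists_bound_of_continuousOn hφ
  refine ⟨B, fun x hx => ?_⟩
  rcases le_total x M with hxM | hMx
  · exact hB x ⟨hx, hxM⟩
  · rw [hconst x hMx]
    exact hB M ⟨haM, le_rfl⟩

section Volterra

variable {V ψ : ℝ → ℝ} {θ M : ℝ}
  (hψ : ∀ x ≥ (0:ℝ), ψ x = x + θ * ∫ t in (0:ℝ)..x, (x - t) * V t * ψ t)
  (hVψ : Integrable fun t => V t * ψ t)

include hψ hVψ

theorem volterra_eq_mul_sub {x : ℝ} (hx : 0 ≤ x) :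
    ψ x = x * (1 + θ * ∫ t in (0:ℝ)..x, V t * ψ t) - θ * ∫ t in (0:ℝ)..x, t * (V t * ψ t) := by
  have hI : IntervalIntegrable (fun t => V t * ψ t) volume 0 x := hVψ.intervalIntegrable
  have hsplit : ∫ t in (0:ℝ)..x, (x - t) * V t * ψ t
      = x * (∫ t in (0:ℝ)..x, V t * ψ t) - ∫ t in (0:ℝ)..x, t * (V t * ψ t) := by
    rw [← intervalIntegral.integral_const_mul, ← integral_sub (hI.const_mul x)
      (hI.continuousOn_mul (g := fun t => t) continuousOn_id)]
    congr 1 with t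
    ring
  rw [hψ x hx, hsplit]
  ring

variable (hres : 1 + θ * ∫ t in (0:ℝ)..M, V t * ψ t = 0)
include hres

theorem volterra_eq_of_le (hM : 0 ≤ M) (hVsupp : ∀ x ∉ Icc 0 M, V x = 0) {x : ℝ} (hx : M ≤ x) :
    ψ x = ψ M := by
  have hI : ∀ g : ℝ → ℝ, Continuous g →
      ∫ t in (0:ℝ)..x, g t * (V t * ψ t) = ∫ t in (0:ℝ)..M, g t * (V t * ψ t) := fun g hg =>
    intervalIntegral_eq_of_forall_gt_eq_zero hx
      (hVψ.intervalIntegrable.continuousOn_mul hg.continuousOn)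
      (hVψ.intervalIntegrable.continuousOn_mul hg.continuousOn)
      fun t ht => by rw [hVsupp t fun h => (h.2.trans_lt ht).false, zero_mul, mul_zero]
  have h1 := hI (fun _ => 1) continuous_const
  have ht := hI id continuous_id
  simp only [one_mul, id] at h1 ht
  rw [volterra_eq_mul_sub hψ hVψ (hM.trans hx), volterra_eq_mul_sub hψ hVψ hM, h1, ht, hres,
    mul_zero, mul_zero]

theorem volterra_eq_add_integral {x : ℝ} (hx : 0 ≤ x) (hxM : x ≤ M) :
    ψ x = ψ M + θ * ∫ t in x..M, (t - x) * (V t * ψ t) := by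
  have hI : ∀ a b, IntervalIntegrable (fun t => V t * ψ t) volume a b :=
    fun _ _ => hVψ.intervalIntegrable
  have hIt : ∀ a b, IntervalIntegrable (fun t => t * (V t * ψ t)) volume a b :=
    fun a b => (hI a b).continuousOn_mul (g := fun t => t) continuousOn_id
  have hsplit : ∫ t in x..M, (t - x) * (V t * ψ t)
      = (∫ t in x..M, t * (V t * ψ t)) - x * ∫ t in x..M, V t * ψ t := by
    rw [← intervalIntegral.integral_const_mul, ← integral_sub (hIt x M) ((hI x M).const_mul x)]
    congr 1 with t
    ring
  rw [volterra_eq_mul_sub hψ hVψ hx, volterra_eq_mul_sub hψ hVψ (hx.trans hxM), hsplit]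
  linear_combination (x - M) * hres + x * θ * integral_add_adjacent_intervals (hI 0 x) (hI x M)
    - θ * integral_add_adjacent_intervals (hIt 0 x) (hIt x M)

theorem volterra_ne_zero {C : ℝ} (hM : 0 < M) (hVC : ∀ x, |V x| ≤ C)
    (hψc : ContinuousOn ψ (Icc 0 M)) : ψ M ≠ 0 := by
  intro h0
  have hbound : ∀ x ∈ Icc 0 M, |ψ x| ≤ |θ| * M * C * ∫ t in x..M, |ψ t| := by
    intro x hx
    have hψi : IntervalIntegrable (fun t => |ψ t|) volume x M :=
      (hψc.abs.mono (Icc_subset_Icc hx.1 le_rfl)).intervalIntegrable_of_Icc hx.2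
    calc |ψ x| = |θ| * |∫ t in x..M, (t - x) * (V t * ψ t)| := by
          rw [volterra_eq_add_integral hψ hVψ hres hx.1 hx.2, h0, zero_add, abs_mul]
      _ ≤ |θ| * ∫ t in x..M, M * C * |ψ t| := by
          gcongr
          refine intervalIntegral.norm_integral_le_of_norm_le
            (f := fun t => (t - x) * (V t * ψ t)) hx.2 (ae_of_all _ fun t ht => ?_)
            (hψi.const_mul _)
          rw [Real.norm_eq_abs, abs_mul, abs_mul, abs_of_nonneg (sub_nonneg.2 ht.1.le), mul_assoc M]
          gcongr
          · linarith [ht.2, hx.1]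
          · exact hVC t
      _ = |θ| * M * C * ∫ t in x..M, |ψ t| := by
          rw [intervalIntegral.integral_const_mul]; ring
  have hzero := eqOn_zero_of_abs_le_mul_integral_abs hψc hbound
  have := hψ M hM.le
  rw [integral_congr (g := fun _ => 0) fun t ht => by
    rw [uIcc_of_le hM.le] at ht; simp [hzero ht], intervalIntegral.integral_zero, h0] at this
  linarith

end Volterra

theorem integrable_sq_div_norm_mul_iff {E : Type*} [NormedAddCommGroup E] [NormedSpace ℝ E]
    [MeasurableSpace E] [BorelSpace E] [FiniteDimensional ℝ E] (hE : Module.finrank ℝ E = 3)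
    (μ : Measure E) [μ.IsAddHaarMeasure] {φ w : ℝ → ℝ} :
    Integrable (fun x => (φ ‖x‖ / ‖x‖) ^ 2 * w ‖x‖) μ ↔
      IntegrableOn (fun r => φ r ^ 2 * w r) (Ioi 0) := by
  have : Nontrivial E := Module.nontrivial_of_finrank_pos (R := ℝ) (by omega)
  rw [integrable_fun_norm_addHaar μ (f := fun r => (φ r / r) ^ 2 * w r), hE]
  refine integrableOn_congr_fun (fun r (hr : 0 < r) => ?_) measurableSet_Ioi
  field_simp
  exact mul_div_cancel₀ _ (by positivity)

theorem integrableOn_mul_rpow_neg_one_add_sq {g : ℝ → ℝ} {s : Set ℝ} {B p : ℝ}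
    (hs : MeasurableSet s) (hg : AEStronglyMeasurable g (volume.restrict s))
    (hB : ∀ r ∈ s, |g r| ≤ B) (hp : 1 < p) :
    IntegrableOn (fun r => g r * (1 + r ^ 2) ^ (-(p / 2))) s := by
  have hw : Integrable fun r : ℝ => (1 + r ^ 2) ^ (-(p / 2)) := by
    simpa [neg_div] using integrable_rpow_neg_one_add_norm_sq (E := ℝ) (μ := volume)
      (r := p) (by simpa using hp)
  exact hw.integrableOn.bdd_mul hg (ae_restrict_of_forall_mem hs hB)

theorem not_integrableOn_Ioi_sq_of_forall_ge_eq {φ : ℝ → ℝ} {a M : ℝ} (haM : a ≤ M)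
    (hφ : ∀ r ≥ M, φ r = φ M) (hφM : φ M ≠ 0) :
    ¬ IntegrableOn (fun r => φ r ^ 2) (Ioi a) := by
  intro h
  have hconst : IntegrableOn (fun _ => φ M ^ 2) (Ioi M) :=
    (h.mono_set (Ioi_subset_Ioi haM)).congr_fun (fun r hr => by simp only [hφ r (le_of_lt hr)])
      measurableSet_Ioi
  simp [integrableOn_const_iff, hφM] at hconst

/-- If `ψ_θ'(M) = 0`, the function `Ψ(x) := ψ_θ(|x|)/|x|` on `ℝ³` belongs to the
weighted space `L²(ℝ³, (1+|x|²)^{−(1+δ)/2} dx)` for every `δ > 0`, but not to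
`L²(ℝ³)`: its squared integral is infinite. -/
theorem resonance_weighted_L2_not_L2
    (M : ℝ) (hM : 0 < M) (V : ℝ → ℝ) (hVmeas : Measurable V)
    (hVbd : ∃ C : ℝ, ∀ x : ℝ, |V x| ≤ C)
    (hVsupp : ∀ x : ℝ, x ∉ Set.Icc 0 M → V x = 0)
    (θ : ℝ) (ψ : ℝ → ℝ) (hψc : ContinuousOn ψ (Set.Ici 0))
    (hψ : ∀ x ≥ (0:ℝ), ψ x = x + θ * ∫ t in (0:ℝ)..x, (x - t) * V t * ψ t)
    (hres : 1 + θ * ∫ t in (0:ℝ)..M, V t * ψ t = 0) :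
    (∀ δ : ℝ, 0 < δ →
      (∫⁻ x : EuclideanSpace ℝ (Fin 3),
        ENNReal.ofReal ((ψ ‖x‖ / ‖x‖) ^ 2 * (1 + ‖x‖ ^ 2) ^ (-((1 + δ) / 2)))) < ⊤) ∧
    (∫⁻ x : EuclideanSpace ℝ (Fin 3),
      ENNReal.ofReal ((ψ ‖x‖ / ‖x‖) ^ 2)) = ⊤ := by
  obtain ⟨C, hC⟩ := hVbd
  have hψM : ContinuousOn ψ (Icc 0 M) := hψc.mono Icc_subset_Ici_self
  have hVψ := integrable_mul_of_support_subset_Icc hVmeas hC hVsupp hψM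
  have hconst : ∀ x ≥ M, ψ x = ψ M := fun x hx =>
    volterra_eq_of_le hψ hVψ hres hM.le hVsupp hx
  obtain ⟨B, hB⟩ := exists_abs_le_of_forall_ge_eq hψM hM.le hconst
  have hψ_sq : AEStronglyMeasurable (fun r => ψ r ^ 2) (volume.restrict (Ioi 0)) :=
    ((hψc.mono Ioi_subset_Ici_self).pow 2).aestronglyMeasurable measurableSet_Ioi
  have hdim := finrank_euclideanSpace_fin (𝕜 := ℝ) (n := 3)
  refine ⟨fun δ hδ => ?_, ?_⟩
  · refine Integrable.lintegral_lt_top ((integrable_sq_div_norm_mul_iff hdim volume (φ := ψ)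
      (w := fun r => (1 + r ^ 2) ^ (-((1 + δ) / 2)))).2 ?_)
    refine integrableOn_mul_rpow_neg_one_add_sq (B := B ^ 2) measurableSet_Ioi hψ_sq
      (fun r hr => ?_) (by linarith : 1 < 1 + δ)
    rw [abs_pow]
    exact pow_le_pow_left₀ (abs_nonneg _) (hB r (le_of_lt hr)) 2
  · by_contra hfin
    have hΨ : Continuous fun x : EuclideanSpace ℝ (Fin 3) => ψ ‖x‖ :=
      hψc.comp_continuous continuous_norm norm_nonneg
    have hint := (lintegral_ofReal_ne_top_iff_integrable
      ((hΨ.measurable.div measurable_norm).pow_const 2).aestronglyMeasurable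
      (ae_of_all _ fun _ => sq_nonneg _)).1 hfin
    refine not_integrableOn_Ioi_sq_of_forall_ge_eq hM.le hconst
      (volterra_ne_zero hψ hVψ hres hM hC hψM) ?_
    simpa using
      (integrable_sq_div_norm_mul_iff hdim volume (w := fun _ => 1)).1 (by simpa using hint)
end
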